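/- arXiv:1512.03461 — 5 statements merged into one kernel-verified Lean document; each statement's English description precedes it below -/
import Mathlib

section
/- For the flat triangle of the Schwarz lantern, writing A²_pqr = (π/(2NM))² for the squared exact (cylindrical) area and Ā²_pqr = (1/16)·L̄²_pr·(4L̄²_pq − L̄²_pr) with L̄²_pr = 4sin²(π/N) and L̄²_pq = 4sin²(π/(2N)) + 1/(4M²), the fractional error satisfies π²/(3N²) − (π⁴/(45N⁴))·(2 + 45M²) < (A²_pqr − Ā²_pqr)/A²_pqr < π²/(3N²) for all integers N, M ≥ 1 (with N sufficiently large if needed). -/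
/-! With `x = π / N`, `s = sin x` and `t = sin (x / 2)`, the double-angle formula gives
`4 t² - s² = 4 t⁴`, so the fractional error is exactly `1 - s² / x² - 16 M² s² t⁴ / x²`.
The Taylor bounds `x - x³/6 < sin x ≤ x - x³/6 + x⁵/120` on `[0, π]` pin `s² / x²` between
`1 - x²/3` and `1 - x²/3 + 2x⁴/45`, and `s < x`, `t ≤ x / 2` bound the last term
by `M² x⁴`. -/

open Real Filter Asymptotics

/-- Squared Euclidean distance between two points of `ℝ³`. -/
noncomputable def distSq (a b : Fin 3 → ℝ) : ℝ :=
  (a 0 - b 0) ^ 2 + (a 1 - b 1) ^ 2 + (a 2 - b 2) ^ 2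

/-- Euclidean inner product on `ℝ³`. -/
noncomputable def inner3 (a b : Fin 3 → ℝ) : ℝ :=
  a 0 * b 0 + a 1 * b 1 + a 2 * b 2

/-- Euclidean area of the triangle with vertices `a b c` in `ℝ³`
(half the norm of the cross product of two edge vectors). -/
noncomputable def triArea (a b c : Fin 3 → ℝ) : ℝ :=
  (1 / 2) * Real.sqrt
    (((b 1 - a 1) * (c 2 - a 2) - (b 2 - a 2) * (c 1 - a 1)) ^ 2 +
     ((b 2 - a 2) * (c 0 - a 0) - (b 0 - a 0) * (c 2 - a 2)) ^ 2 +
     ((b 0 - a 0) * (c 1 - a 1) - (b 1 - a 1) * (c 0 - a 0)) ^ 2)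

/-- Vertex `p = (1,0,0)` of a typical Schwarz-lantern triangle. -/
noncomputable def vecP : Fin 3 → ℝ := ![1, 0, 0]

/-- Vertex `q = (cos(π/N), sin(π/N), 1/(2M))` of a typical Schwarz-lantern triangle. -/
noncomputable def vecQ (N M : ℝ) : Fin 3 → ℝ := ![Real.cos (π / N), Real.sin (π / N), 1 / (2 * M)]

/-- Vertex `r = (cos(2π/N), sin(2π/N), 0)` of a typical Schwarz-lantern triangle. -/
noncomputable def vecR (N : ℝ) : Fin 3 → ℝ := ![Real.cos (2 * π / N), Real.sin (2 * π / N), 0]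

/-- Outward unit normal of the unit cylinder `x² + y² = 1` at a point `(x,y,z)`. -/
noncomputable def cylNormal (v : Fin 3 → ℝ) : Fin 3 → ℝ := ![v 0, v 1, 0]

namespace Real

theorem cos_le_one_sub_sq_div_two_add_pow_four_div (x : ℝ) :
    cos x ≤ 1 - x ^ 2 / 2 + x ^ 4 / 24 := by
  wlog hx : 0 ≤ x
  · simpa [cos_neg, even_two.neg_pow, (by decide : Even 4).neg_pow] using this (-x) (by linarith)
  let f (t : ℝ) : ℝ := 1 - t ^ 2 / 2 + t ^ 4 / 24 - cos t
  have hderiv (t : ℝ) : deriv f t = sin t - (t - t ^ 3 / 6) := by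
    simp (disch := fun_prop) [f]
    ring
  have hmono : MonotoneOn f (Set.Ici 0) := by
    apply monotoneOn_of_deriv_nonneg (convex_Ici 0) (by fun_prop) (by fun_prop)
    intro t ht
    rw [interior_Ici] at ht
    grind [sin_gt_sub_cube]
  have h0 : f 0 ≤ f x := hmono (by simp) hx hx
  grind [cos_zero]

theorem sin_le_sub_cube_add_pow_five_div {x : ℝ} (hx : 0 ≤ x) :
    sin x ≤ x - x ^ 3 / 6 + x ^ 5 / 120 := by
  let f (t : ℝ) : ℝ := t - t ^ 3 / 6 + t ^ 5 / 120 - sin t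
  have hderiv (t : ℝ) : deriv f t = 1 - t ^ 2 / 2 + t ^ 4 / 24 - cos t := by
    simp (disch := fun_prop) [f]
    ring
  have hmono : MonotoneOn f (Set.Ici 0) := by
    apply monotoneOn_of_deriv_nonneg (convex_Ici 0) (by fun_prop) (by fun_prop)
    intro t _
    grind [cos_le_one_sub_sq_div_two_add_pow_four_div]
  have h0 : f 0 ≤ f x := hmono (by simp) hx hx
  grind [sin_zero]

theorem sin_sq_le_sq_sub_pow_four_div_three_add_pow_six {x : ℝ} (hx₀ : 0 ≤ x)
    (hxπ : x ≤ π) :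
    sin x ^ 2 ≤ x ^ 2 - x ^ 4 / 3 + 2 * x ^ 6 / 45 := by
  have h := pow_le_pow_left₀ (sin_nonneg_of_nonneg_of_le_pi hx₀ hxπ)
    (sin_le_sub_cube_add_pow_five_div hx₀) 2
  have hx2 : x ^ 2 ≤ 40 := by nlinarith [pi_lt_four]
  nlinarith [mul_le_mul_of_nonneg_left hx2 (pow_nonneg hx₀ 8)]

theorem sq_sub_pow_four_div_three_lt_sin_sq {x : ℝ} (hx₀ : 0 < x) (hx : x ^ 2 < 6) :
    x ^ 2 - x ^ 4 / 3 < sin x ^ 2 := by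
  have hpos : 0 < x - x ^ 3 / 6 := by nlinarith
  have h := pow_lt_pow_left₀ (sin_gt_sub_cube hx₀) hpos.le two_ne_zero
  nlinarith [pow_pos hx₀ 6]

theorem four_mul_sin_half_sq_sub_sin_sq (x : ℝ) :
    4 * sin (x / 2) ^ 2 - sin x ^ 2 = 4 * sin (x / 2) ^ 4 := by
  have h := sin_sq_add_cos_sq (x / 2)
  have h2 : sin x = 2 * sin (x / 2) * cos (x / 2) := by rw [← sin_two_mul]; ring_nf
  rw [h2]
  linear_combination (-4 * sin (x / 2) ^ 2) * h

end Real

theorem schwarz_fractional_error_eq {x M : ℝ} (hx : x ≠ 0) (hM : M ≠ 0) :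
    let A2 := (x / (2 * M)) ^ 2
    let Abar2 := 1 / 16 * (4 * sin x ^ 2) *
      (4 * (4 * sin (x / 2) ^ 2 + 1 / (4 * M ^ 2)) - 4 * sin x ^ 2)
    (A2 - Abar2) / A2 =
      1 - sin x ^ 2 / x ^ 2 - 16 * M ^ 2 * sin x ^ 2 * sin (x / 2) ^ 4 / x ^ 2 := by
  intro A2 Abar2
  have hAbar2 : Abar2 = sin x ^ 2 / (4 * M ^ 2) + 4 * sin x ^ 2 * sin (x / 2) ^ 4 := by
    simp only [Abar2]
    field_simp
    linear_combination (64 * M ^ 2 * sin x ^ 2) * four_mul_sin_half_sq_sub_sin_sq x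
  rw [hAbar2]
  simp only [A2]
  field_simp
  ring

theorem schwarz_fractional_error_bounds_of_angle {x M : ℝ} (hx₀ : 0 < x) (hx : x ^ 2 < 6)
    (hM : 0 < M) :
    let A2 := (x / (2 * M)) ^ 2
    let Abar2 := 1 / 16 * (4 * sin x ^ 2) *
      (4 * (4 * sin (x / 2) ^ 2 + 1 / (4 * M ^ 2)) - 4 * sin x ^ 2)
    x ^ 2 / 3 - x ^ 4 / 45 * (2 + 45 * M ^ 2) < (A2 - Abar2) / A2 ∧
      (A2 - Abar2) / A2 < x ^ 2 / 3 := by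
  intro A2 Abar2
  rw [schwarz_fractional_error_eq hx₀.ne' hM.ne']
  have hx2 : 0 < x ^ 2 := by positivity
  have hs_lower := sq_sub_pow_four_div_three_lt_sin_sq hx₀ hx
  have hxπ : x ≤ π := by nlinarith [pi_gt_three]
  have hs_upper := sin_sq_le_sq_sub_pow_four_div_three_add_pow_six hx₀.le hxπ
  have ht : sin (x / 2) ^ 4 ≤ (x / 2) ^ 4 := by
    simpa only [← pow_mul] using pow_le_pow_left₀ (sq_nonneg _) (sin_sq_le_sq (x := x / 2)) 2
  have hst : sin x ^ 2 * sin (x / 2) ^ 4 < x ^ 2 * (x / 2) ^ 4 :=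
    calc sin x ^ 2 * sin (x / 2) ^ 4 ≤ sin x ^ 2 * (x / 2) ^ 4 := by gcongr
      _ < x ^ 2 * (x / 2) ^ 4 := mul_lt_mul_of_pos_right (sin_sq_lt_sq hx₀.ne') (by positivity)
  have hsx_lower : 1 - x ^ 2 / 3 < sin x ^ 2 / x ^ 2 := by
    rw [lt_div_iff₀ hx2]; linarith
  have hsx_upper : sin x ^ 2 / x ^ 2 ≤ 1 - x ^ 2 / 3 + 2 * x ^ 4 / 45 := by
    rw [div_le_iff₀ hx2]; linarith
  have hcorr : 16 * M ^ 2 * sin x ^ 2 * sin (x / 2) ^ 4 / x ^ 2 < M ^ 2 * x ^ 4 := by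
    rw [div_lt_iff₀ hx2]; nlinarith [mul_lt_mul_of_pos_left hst (by positivity : 0 < 16 * M ^ 2)]
  have hcorr_nonneg : 0 ≤ 16 * M ^ 2 * sin x ^ 2 * sin (x / 2) ^ 4 / x ^ 2 := by positivity
  constructor <;> linarith

/-- fractional error bounds for the flat-triangle area of the Schwarz lantern:
`π²/(3N²) − (π⁴/(45N⁴))(2 + 45M²) < (A² − Ā²)/A² < π²/(3N²)` for all `M ≥ 1` and all
sufficiently large `N`. -/
theorem schwarz_fractional_error_bounds :
    ∃ N₀ : ℕ, ∀ N M : ℕ, N₀ ≤ N → 1 ≤ M →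
      let Lpr2 : ℝ := 4 * Real.sin (π / N) ^ 2
      let Lpq2 : ℝ := 4 * Real.sin (π / (2 * N)) ^ 2 + 1 / (4 * (M : ℝ) ^ 2)
      let A2 : ℝ := (π / (2 * N * M)) ^ 2
      let Abar2 : ℝ := (1 / 16) * Lpr2 * (4 * Lpq2 - Lpr2)
      π ^ 2 / (3 * N ^ 2) - (π ^ 4 / (45 * N ^ 4)) * (2 + 45 * M ^ 2) < (A2 - Abar2) / A2 ∧
      (A2 - Abar2) / A2 < π ^ 2 / (3 * N ^ 2) := by
  refine ⟨4, fun N M hN hM => ?_⟩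
  have hNr : (4 : ℝ) ≤ N := by exact_mod_cast hN
  have hMr : (0 : ℝ) < M := by exact_mod_cast hM
  have hx₀ : 0 < π / N := by positivity
  have hx₁ : π / N ≤ 1 := (div_le_one (by linarith)).2 (by linarith [pi_le_four])
  have e₁ : π / (2 * N) = π / N / 2 := by ring
  have e₂ : π / (2 * N * M) = π / N / (2 * M) := by ring
  have e₃ : π ^ 2 / (3 * N ^ 2) = (π / N) ^ 2 / 3 := by ring
  have e₄ : π ^ 4 / (45 * N ^ 4) = (π / N) ^ 4 / 45 := by ring
  rw [e₁, e₂, e₃, e₄]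
  exact schwarz_fractional_error_bounds_of_angle hx₀ (by nlinarith) hMr
end

section
/- If M = M(N) satisfies M/N² → 0 as N → ∞, then the total area S̄(N,M) = 4NM·Ā_pqr of the Schwarz lantern converges to the cylinder area 2π as N → ∞. -/
open Real Filter Asymptotics

/-!
The lantern triangle has area `sin(π/N)/(2M) · √(1 + (2M(1 - cos(π/N)))²)`, so the total area is
`2 · N sin(π/N) · √(1 + (2M(1 - cos(π/N)))²)`. Here `N sin(π/N) → π`, and since
`0 ≤ 1 - cos(π/N) ≤ π²/(2N²)`, the hypothesis `M/N² → 0` forces `M(1 - cos(π/N)) → 0`, so the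
square root tends to `1`.
-/

open Topology

lemma triArea_vecP_vecQ_vecR {N M : ℝ} (hN : 1 ≤ N) (hM : 0 < M) :
    triArea vecP (vecQ N M) (vecR N) =
      sin (π / N) / (2 * M) * √(1 + (2 * M * (1 - cos (π / N))) ^ 2) := by
  have hsin : 0 ≤ sin (π / N) :=
    sin_nonneg_of_nonneg_of_le_pi (by positivity) (div_le_self pi_pos.le hN)
  have hhalf : sin (π / N) / (2 * M) * √(1 + (2 * M * (1 - cos (π / N))) ^ 2) =
      1 / 2 * √((sin (π / N) / M) ^ 2 * (1 + (2 * M * (1 - cos (π / N))) ^ 2)) := by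
    rw [sqrt_mul (sq_nonneg _), sqrt_sq (by positivity)]
    ring
  rw [hhalf, triArea, vecP, vecQ, vecR, mul_div_assoc, cos_two_mul, sin_two_mul]
  simp only [Matrix.cons_val_zero, Matrix.cons_val_one, Matrix.cons_val_two, Matrix.head_cons,
    Matrix.tail_cons]
  congr 2
  field_simp
  linear_combination (4 * cos (π / N) ^ 2 - 4) * sin_sq_add_cos_sq (π / N)

lemma tendsto_mul_sin_div_atTop (a : ℝ) :
    Tendsto (fun x : ℝ => x * sin (a / x)) atTop (𝓝 a) := by
  have hsinc : Tendsto (fun x : ℝ => a * sinc (a / x)) atTop (𝓝 (a * sinc 0)) :=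
    ((continuous_sinc.tendsto 0).comp (tendsto_const_nhds.div_atTop tendsto_id)).const_mul a
  rw [sinc_zero, mul_one] at hsinc
  refine hsinc.congr' ?_
  filter_upwards [eventually_gt_atTop 0] with x hx
  rcases eq_or_ne a 0 with rfl | ha
  · simp
  · rw [sinc_of_ne_zero (by positivity)]
    field_simp

lemma tendsto_mul_one_sub_cos_of_tendsto_mul_sq {ι : Type*} {l : Filter ι} {a x : ι → ℝ}
    (ha : ∀ i, 0 ≤ a i) (h : Tendsto (fun i => a i * x i ^ 2) l (𝓝 0)) :
    Tendsto (fun i => a i * (1 - cos (x i))) l (𝓝 0) := by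
  have hhalf : Tendsto (fun i => a i * x i ^ 2 / 2) l (𝓝 0) := by
    simpa using h.div_const 2
  refine tendsto_of_tendsto_of_tendsto_of_le_of_le tendsto_const_nhds hhalf
    (fun i => mul_nonneg (ha i) (sub_nonneg.mpr (cos_le_one _))) (fun i => ?_)
  have := mul_le_mul_of_nonneg_left (one_sub_sq_div_two_le_cos (x := x i)) (ha i)
  linarith

/-- if `M(N)/N² → 0` as `N → ∞`, then the total Schwarz lantern area
`S̄(N, M(N)) = 4·N·M(N)·Ā_pqr` converges to the cylinder area `2π`. -/
theorem schwarz_area_converges (M : ℕ → ℕ) (hMpos : ∀ N, 0 < M N)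
    (h : Filter.Tendsto (fun N : ℕ => (M N : ℝ) / (N : ℝ) ^ 2) Filter.atTop (nhds 0)) :
    Filter.Tendsto
      (fun N : ℕ => 4 * (N : ℝ) * (M N : ℝ) * triArea vecP (vecQ N (M N)) (vecR N))
      Filter.atTop (nhds (2 * π)) := by
  have hsin : Tendsto (fun N : ℕ => (N : ℝ) * sin (π / N)) atTop (𝓝 π) :=
    (tendsto_mul_sin_div_atTop π).comp tendsto_natCast_atTop_atTop
  have hcos : Tendsto (fun N : ℕ => (M N : ℝ) * (1 - cos (π / N))) atTop (𝓝 0) := by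
    refine tendsto_mul_one_sub_cos_of_tendsto_mul_sq (fun N => (M N).cast_nonneg) ?_
    simpa only [mul_zero] using (h.const_mul (π ^ 2)).congr fun N => by ring
  have hsqrt : Tendsto (fun N : ℕ => √(1 + (2 * M N * (1 - cos (π / N))) ^ 2)) atTop (𝓝 1) := by
    simpa [mul_assoc] using (((hcos.const_mul 2).pow 2).const_add 1).sqrt
  have hlim := (hsin.const_mul 2).mul hsqrt
  rw [mul_one] at hlim
  refine hlim.congr' ?_
  filter_upwards [eventually_ge_atTop 1] with N hN
  have hM : (0 : ℝ) < M N := by exact_mod_cast hMpos N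
  rw [triArea_vecP_vecQ_vecR (by exact_mod_cast hN) hM]
  field_simp
  ring
end

section
/- If M(N)/N² → ∞ as N → ∞, then the total Schwarz lantern area S̄(N, M(N)) = 4N·M(N)·Ā_pqr diverges to infinity. -/
open Real Filter Asymptotics

lemma key_lower (N : ℕ) (hN : 2 ≤ N) (Mv : ℝ) (hM : 0 < Mv) :
    16 * Mv / (N : ℝ) ^ 2 ≤ 4 * (N : ℝ) * Mv * triArea vecP (vecQ N Mv) (vecR N) := by
  have hN0 : (0:ℝ) < N := by positivity
  have hπ := Real.pi_pos
  set t : ℝ := π / N with ht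
  have htpos : 0 < t := by positivity
  have htle : t ≤ π / 2 := by
    rw [ht, div_le_div_iff₀ hN0 two_pos]
    have := mul_le_mul_of_nonneg_left (by exact_mod_cast hN : (2:ℝ) ≤ N) hπ.le
    linarith
  have hsin : 2 / (N:ℝ) ≤ Real.sin t := by
    calc 2 / (N:ℝ) = 2 / π * t := by rw [ht]; field_simp
      _ ≤ Real.sin t := Real.mul_le_sin htpos.le htle
  have hcos : 2 / (N:ℝ)^2 ≤ 1 - Real.cos t := by
    have h1 := Real.cos_le_one_sub_mul_cos_sq (x := t) (by rw [abs_of_pos htpos]; linarith)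
    have h2 : 2 / π ^ 2 * t ^ 2 = 2 / (N:ℝ) ^ 2 := by rw [ht]; field_simp
    linarith [h2 ▸ h1]
  have hs0 : (0:ℝ) ≤ Real.sin t := le_trans (by positivity) hsin
  have hc0 : (0:ℝ) ≤ 1 - Real.cos t := le_trans (by positivity) hcos
  have harea : Real.sin t * (1 - Real.cos t) ≤ triArea vecP (vecQ N Mv) (vecR N) := by
    have h2t : 2 * π / (N:ℝ) = 2 * t := by rw [ht]; ring
    unfold triArea vecP vecQ vecR
    simp only [Matrix.cons_val_zero, Matrix.cons_val_one, Matrix.head_cons,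
      Matrix.cons_val_two, Matrix.tail_cons, sub_zero]
    rw [h2t, ← ht]
    set A := (Real.sin t * 0 - 1 / (2 * Mv) * Real.sin (2 * t)) ^ 2 with hA
    set B := (1 / (2 * Mv) * (Real.cos (2 * t) - 1) - (Real.cos t - 1) * 0) ^ 2 with hB
    have hzc : ((Real.cos t - 1) * Real.sin (2 * t) - Real.sin t * (Real.cos (2 * t) - 1))
        = 2 * Real.sin t * (1 - Real.cos t) := by
      rw [Real.sin_two_mul, Real.cos_two_mul]; ring
    rw [hzc]
    have h1 : Real.sqrt ((2 * Real.sin t * (1 - Real.cos t)) ^ 2)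
        ≤ Real.sqrt (A + B + (2 * Real.sin t * (1 - Real.cos t)) ^ 2) := by
      apply Real.sqrt_le_sqrt; nlinarith [sq_nonneg (Real.sin t * 0 - 1 / (2 * Mv) * Real.sin (2 * t)), sq_nonneg (1 / (2 * Mv) * (Real.cos (2 * t) - 1) - (Real.cos t - 1) * 0)]
    have h2 : Real.sqrt ((2 * Real.sin t * (1 - Real.cos t)) ^ 2)
        = 2 * Real.sin t * (1 - Real.cos t) := by
      rw [Real.sqrt_sq (by nlinarith)]
    nlinarith [h1, h2]
  have hstep : 16 * Mv / (N:ℝ)^2 ≤ 4 * (N:ℝ) * Mv * (Real.sin t * (1 - Real.cos t)) := by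
    have h3 : (2/(N:ℝ)) * (2/(N:ℝ)^2) ≤ Real.sin t * (1 - Real.cos t) :=
      mul_le_mul hsin hcos (by positivity) hs0
    calc 16 * Mv / (N:ℝ)^2 = 4 * (N:ℝ) * Mv * ((2/(N:ℝ)) * (2/(N:ℝ)^2)) := by
          field_simp; ring
      _ ≤ _ := mul_le_mul_of_nonneg_left h3 (by positivity)
  calc 16 * Mv / (N:ℝ)^2 ≤ 4 * (N:ℝ) * Mv * (Real.sin t * (1 - Real.cos t)) := hstep
    _ ≤ _ := by
      apply mul_le_mul_of_nonneg_left harea (by positivity)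


/-- if `M(N)/N² → ∞` as `N → ∞`, then the total Schwarz lantern area
`S̄(N, M(N)) = 4·N·M(N)·Ā_pqr` diverges to infinity. -/
theorem schwarz_area_diverges (M : ℕ → ℕ) (hMpos : ∀ N, 0 < M N)
    (h : Filter.Tendsto (fun N : ℕ => (M N : ℝ) / (N : ℝ) ^ 2) Filter.atTop Filter.atTop) :
    Filter.Tendsto
      (fun N : ℕ => 4 * (N : ℝ) * (M N : ℝ) * triArea vecP (vecQ N (M N)) (vecR N))
      Filter.atTop Filter.atTop := by
  have h16 : Filter.Tendsto (fun N : ℕ => 16 * (M N : ℝ) / (N : ℝ) ^ 2) atTop atTop := by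
    have := h.const_mul_atTop (by norm_num : (0:ℝ) < 16)
    simpa [mul_div_assoc] using this
  refine tendsto_atTop_mono' atTop ?_ h16
  filter_upwards [eventually_ge_atTop 2] with N hN
  exact key_lower N hN (M N) (by exact_mod_cast hMpos N)
end

section
/- With corrected squared leg-lengths L̃²_pr = L̄²_pr + (1/12)(⟨n(p)−n(r), p−r⟩)² and L̃²_pq = L̄²_pq + (1/12)(⟨n(p)−n(q), p−q⟩)², define the corrected triangle area by Ã²_pqr = (1/16)·L̃²_pr·(4L̃²_pq − L̃²_pr) and total corrected lantern area S̃ = 4NM·Ã_pqr. Then S² − S̃² satisfies 32π⁶/(45N⁴) − (8π⁸/(189N⁶))·(6 + 63M²) < S² − S̃² < 32π⁶/(45N⁴), where S = 2π. -/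
open Real Filter Asymptotics

/-! With `θ = π / N`, the corrected legs are `L̃²_pr = 4 sin²θ + (4/3) sin⁴θ =: A` and
`4 L̃²_pq − L̃²_pr = 1/M² + B` with `B = (4/3)(1 − cos θ)³(3 + cos θ)`, so that
`S² − S̃² = N² (4θ² − A(1 + M² B))`.

Since `A = 5/2 − (8/3) cos 2θ + (1/6) cos 4θ` is a linear combination of cosines, its Taylor series
is `4θ² − (32/45)θ⁶ + (16/63)θ⁸ − cθ¹⁰ + …` with `c > 0`, the `θ⁴` term cancelling. A Taylor bound for
`cos` of degree ten with an `O(θ¹²)` remainder therefore traps `A` strictly between its truncations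
after `θ⁶` and after `θ⁸` once `θ ≤ 1/10`, i.e. `N ≥ 32`. Finally `0 ≤ 1 − cos θ ≤ θ²/2` gives
`0 ≤ B ≤ (2/3)θ⁶`, hence `0 ≤ M² A B ≤ (8/3) M² θ⁸`. -/

-- `13 / 5748019200 = 13 / (12! * 12)` is the remainder constant of `Complex.exp_bound` for `n = 12`.
theorem Real.abs_cos_sub_taylor_le_pow_twelve {x : ℝ} (hx : |x| ≤ 1) :
    |cos x - (1 - x ^ 2 / 2 + x ^ 4 / 24 - x ^ 6 / 720 + x ^ 8 / 40320 - x ^ 10 / 3628800)| ≤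
      |x| ^ 12 * (13 / 5748019200) := by
  have hre : (Complex.exp (x * Complex.I)).re = cos x := by
    simp [Complex.exp_ofReal_mul_I_re]
  have hsum : (∑ m ∈ Finset.range 12, (x * Complex.I) ^ m / m.factorial).re
      = 1 - x ^ 2 / 2 + x ^ 4 / 24 - x ^ 6 / 720 + x ^ 8 / 40320 - x ^ 10 / 3628800 := by
    simp only [Finset.sum_range_succ, Finset.sum_range_zero, mul_pow, Complex.add_re,
      Complex.div_natCast_re, ← Complex.ofReal_pow, Complex.re_ofReal_mul]
    norm_num [Nat.factorial, pow_succ Complex.I, Complex.I_mul_I]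
    ring
  have hexp := Complex.exp_bound (x := x * Complex.I) (by simpa using hx) (n := 12) (by norm_num)
  rw [norm_mul, Complex.norm_I, Complex.norm_real, Real.norm_eq_abs, mul_one] at hexp
  rw [← hre, ← hsum, ← Complex.sub_re]
  refine (Complex.abs_re_le_norm _).trans (hexp.trans_eq ?_)
  norm_num [Nat.factorial]

theorem four_mul_sin_sq_add_sin_pow_four_eq (θ : ℝ) :
    4 * sin θ ^ 2 + 4 / 3 * sin θ ^ 4 = 5 / 2 - 8 / 3 * cos (2 * θ) + 1 / 6 * cos (4 * θ) := by
  have h4 : cos (4 * θ) = 2 * cos (2 * θ) ^ 2 - 1 := by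
    rw [show 4 * θ = 2 * (2 * θ) by ring, cos_two_mul]
  rw [h4, cos_two_mul, cos_sq']
  ring

theorem four_mul_sin_sq_add_sin_pow_four_bounds {θ : ℝ} (h0 : 0 < θ) (h1 : θ ≤ 1 / 10) :
    4 * θ ^ 2 - 32 / 45 * θ ^ 6 < 4 * sin θ ^ 2 + 4 / 3 * sin θ ^ 4 ∧
      4 * sin θ ^ 2 + 4 / 3 * sin θ ^ 4 < 4 * θ ^ 2 - 32 / 45 * θ ^ 6 + 16 / 63 * θ ^ 8 := by
  rw [four_mul_sin_sq_add_sin_pow_four_eq]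
  have h2θ : |2 * θ| = 2 * θ := abs_of_pos (by positivity)
  have h4θ : |4 * θ| = 4 * θ := abs_of_pos (by positivity)
  have h2 := Real.abs_cos_sub_taylor_le_pow_twelve (x := 2 * θ) (by linarith)
  have h4 := Real.abs_cos_sub_taylor_le_pow_twelve (x := 4 * θ) (by linarith)
  rw [h2θ, abs_le] at h2
  rw [h4θ, abs_le] at h4
  have hsq : θ ^ 2 ≤ 1 / 100 := by nlinarith
  have h8 : 0 < θ ^ 8 := by positivity
  have h10 : 0 < θ ^ 10 := by positivity
  have h10_le : θ ^ 10 ≤ θ ^ 8 / 100 := by nlinarith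
  have h12_le : θ ^ 12 ≤ θ ^ 10 / 100 := by nlinarith
  constructor <;> linarith [h2.1, h2.2, h4.1, h4.2]

/-- The paper's corrected squared edge length `L̃²`. -/
noncomputable def correctedDistSq (a b : Fin 3 → ℝ) : ℝ :=
  distSq a b + (1 / 12) * (inner3 (fun i => cylNormal a i - cylNormal b i) (fun i => a i - b i)) ^ 2

theorem correctedDistSq_vecP_vecR (N : ℝ) :
    correctedDistSq vecP (vecR N) = 4 * sin (π / N) ^ 2 + 4 / 3 * sin (π / N) ^ 4 := by
  have hcos : cos (2 * π / N) = 1 - 2 * sin (π / N) ^ 2 := by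
    rw [mul_div_assoc, cos_two_mul, cos_sq']; ring
  have hsin := sin_sq (2 * π / N)
  simp only [correctedDistSq, distSq, inner3, vecP, vecR, cylNormal, Matrix.cons_val_zero,
    Matrix.cons_val_one, Matrix.cons_val_two, Matrix.head_cons, Matrix.tail_cons]
  rw [hcos] at hsin ⊢
  linear_combination (1 + (2 * (2 * sin (π / N) ^ 2) ^ 2 + sin (2 * π / N) ^ 2
    + (1 - (1 - 2 * sin (π / N) ^ 2) ^ 2)) / 12) * hsin

theorem correctedDistSq_vecP_vecQ (N M : ℝ) :
    correctedDistSq vecP (vecQ N M) =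
      2 * (1 - cos (π / N)) + 1 / (2 * M) ^ 2 + 1 / 3 * (1 - cos (π / N)) ^ 2 := by
  simp only [correctedDistSq, distSq, inner3, vecP, vecQ, cylNormal, Matrix.cons_val_zero,
    Matrix.cons_val_one, Matrix.cons_val_two, Matrix.head_cons, Matrix.tail_cons]
  linear_combination (1 + ((1 - cos (π / N)) ^ 2 + sin (π / N) ^ 2 + 2 * (1 - cos (π / N))) / 12)
    * sin_sq_add_cos_sq (π / N)

theorem four_mul_correctedDistSq_vecP_vecQ_sub (N M : ℝ) :
    4 * correctedDistSq vecP (vecQ N M) - correctedDistSq vecP (vecR N) =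
      1 / M ^ 2 + 4 / 3 * (1 - cos (π / N)) ^ 3 * (3 + cos (π / N)) := by
  rw [correctedDistSq_vecP_vecQ, correctedDistSq_vecP_vecR,
    show sin (π / N) ^ 4 = (sin (π / N) ^ 2) ^ 2 by ring, sin_sq]
  ring

theorem one_sub_cos_pow_three_mul_bounds (θ : ℝ) :
    0 ≤ 4 / 3 * (1 - cos θ) ^ 3 * (3 + cos θ) ∧
      4 / 3 * (1 - cos θ) ^ 3 * (3 + cos θ) ≤ 2 / 3 * θ ^ 6 := by
  have hw0 : 0 ≤ 1 - cos θ := sub_nonneg.2 (cos_le_one θ)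
  have hw : (1 - cos θ) ^ 3 ≤ (θ ^ 2 / 2) ^ 3 :=
    pow_le_pow_left₀ hw0 (by linarith [one_sub_sq_div_two_le_cos (x := θ)]) 3
  have hc0 : 0 ≤ 3 + cos θ := by linarith [neg_one_le_cos θ]
  have hc : 3 + cos θ ≤ 4 := by linarith [cos_le_one θ]
  refine ⟨by positivity, ?_⟩
  calc 4 / 3 * (1 - cos θ) ^ 3 * (3 + cos θ) ≤ 4 / 3 * (θ ^ 2 / 2) ^ 3 * 4 := by gcongr
    _ = 2 / 3 * θ ^ 6 := by ring

/-- The paper's corrected lantern area `S̃ = 4NM·Ã_pqr`. -/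
noncomputable def correctedLanternArea (N M : ℝ) : ℝ :=
  4 * N * M * √((1 / 16) * correctedDistSq vecP (vecR N) *
    (4 * correctedDistSq vecP (vecQ N M) - correctedDistSq vecP (vecR N)))

theorem correctedLanternArea_sq (N : ℝ) {M : ℝ} (hM : M ≠ 0) :
    correctedLanternArea N M ^ 2 = N ^ 2 * (4 * sin (π / N) ^ 2 + 4 / 3 * sin (π / N) ^ 4) *
      (1 + M ^ 2 * (4 / 3 * (1 - cos (π / N)) ^ 3 * (3 + cos (π / N)))) := by
  have hB := (one_sub_cos_pow_three_mul_bounds (π / N)).1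
  rw [correctedLanternArea, four_mul_correctedDistSq_vecP_vecQ_sub, correctedDistSq_vecP_vecR,
    mul_pow, sq_sqrt (by positivity)]
  field_simp
  ring

theorem lantern_area_defect_bounds {θ A B : ℝ} (M : ℝ) (hθ0 : 0 < θ) (hθ1 : θ ≤ 1 / 10)
    (hA : 4 * θ ^ 2 - 32 / 45 * θ ^ 6 < A ∧ A < 4 * θ ^ 2 - 32 / 45 * θ ^ 6 + 16 / 63 * θ ^ 8)
    (hB : 0 ≤ B ∧ B ≤ 2 / 3 * θ ^ 6) :
    32 / 45 * θ ^ 6 - 8 / 189 * θ ^ 8 * (6 + 63 * M ^ 2) < 4 * θ ^ 2 - A * (1 + M ^ 2 * B) ∧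
      4 * θ ^ 2 - A * (1 + M ^ 2 * B) < 32 / 45 * θ ^ 6 := by
  obtain ⟨hA_lo, hA_hi⟩ := hA
  have hθ2 : θ ^ 2 ≤ 1 / 100 := by nlinarith
  have hA0 : 0 ≤ A := by nlinarith [pow_pos hθ0 2, pow_pos hθ0 4]
  have hA4 : A ≤ 4 * θ ^ 2 := by nlinarith [pow_pos hθ0 6]
  have hAB0 : 0 ≤ M ^ 2 * (A * B) := by have := hB.1; positivity
  have hAB : M ^ 2 * (A * B) ≤ M ^ 2 * (8 / 3 * θ ^ 8) := by
    refine mul_le_mul_of_nonneg_left ?_ (sq_nonneg M)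
    calc A * B ≤ 4 * θ ^ 2 * (2 / 3 * θ ^ 6) := mul_le_mul hA4 hB.2 hB.1 (by positivity)
      _ = 8 / 3 * θ ^ 8 := by ring
  constructor <;> linarith

/-- with corrected squared leg lengths
`L̃²_ij = L̄²_ij + (1/12)⟨n(i)−n(j), xᵢ−xⱼ⟩²`, corrected triangle area
`Ã²_pqr = (1/16)L̃²_pr(4L̃²_pq − L̃²_pr)` and total corrected lantern area
`S̃ = 4NM·Ã_pqr`, one has
`32π⁶/(45N⁴) − (8π⁸/(189N⁶))(6 + 63M²) < S² − S̃² < 32π⁶/(45N⁴)` with `S = 2π`,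
for all `M ≥ 1` and all sufficiently large `N`. -/
theorem schwarz_corrected_area_error_bounds :
    ∃ N₀ : ℕ, ∀ N M : ℕ, N₀ ≤ N → 1 ≤ M →
      let p := vecP
      let q := vecQ N M
      let r := vecR N
      let Lpr2 : ℝ := distSq p r +
        (1 / 12) * (inner3 (fun i => cylNormal p i - cylNormal r i) (fun i => p i - r i)) ^ 2
      let Lpq2 : ℝ := distSq p q +
        (1 / 12) * (inner3 (fun i => cylNormal p i - cylNormal q i) (fun i => p i - q i)) ^ 2
      let Atil2 : ℝ := (1 / 16) * Lpr2 * (4 * Lpq2 - Lpr2)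
      let Stil : ℝ := 4 * N * M * Real.sqrt Atil2
      32 * π ^ 6 / (45 * N ^ 4) - (8 * π ^ 8 / (189 * N ^ 6)) * (6 + 63 * M ^ 2)
          < (2 * π) ^ 2 - Stil ^ 2 ∧
      (2 * π) ^ 2 - Stil ^ 2 < 32 * π ^ 6 / (45 * N ^ 4) := by
  refine ⟨32, fun N M hN hM => ?_⟩
  intro p q r Lpr2 Lpq2 Atil2 Stil
  have hN : (32 : ℝ) ≤ N := by exact_mod_cast hN
  have hM : (M : ℝ) ≠ 0 := by positivity
  have hStil : Stil ^ 2 = _ := correctedLanternArea_sq N hM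
  have hθ0 : 0 < π / N := by positivity
  have hθ1 : π / N ≤ 1 / 10 := by rw [div_le_iff₀ (by positivity)]; linarith [pi_lt_d2]
  obtain ⟨hlo, hhi⟩ := lantern_area_defect_bounds M hθ0 hθ1
    (four_mul_sin_sq_add_sin_pow_four_bounds hθ0 hθ1) (one_sub_cos_pow_three_mul_bounds _)
  have hN2 : (0 : ℝ) < N ^ 2 := by positivity
  have hN0 : (N : ℝ) ≠ 0 := by positivity
  have hS2 : (2 * π) ^ 2 = N ^ 2 * (4 * (π / N) ^ 2) := by field_simp; ring
  have hθ6 : 32 * π ^ 6 / (45 * N ^ 4) = N ^ 2 * (32 / 45 * (π / N) ^ 6) := by field_simp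
  have hθ8 : 8 * π ^ 8 / (189 * N ^ 6) = N ^ 2 * (8 / 189 * (π / N) ^ 8) := by field_simp
  rw [hStil, hS2, hθ6, hθ8]
  constructor
  · linarith [mul_lt_mul_of_pos_left hlo hN2]
  · linarith [mul_lt_mul_of_pos_left hhi hN2]
end

section
/- Let x̄ ∈ (0,1), z̄ = √(1−x̄²), L̄²_pa = 2(1−z̄), L̄²_ab = 2x̄². Define corrected lengths L̃²_pa = L̄²_pa + (1/12)L̄⁴_pa and L̃²_ab = L̄²_ab + (1/12)L̄⁴_ab, and define x̃, K by x̃² = L̃²_pa and 2x̃² − (1/3)K·x̃⁴ = L̃²_ab. Then K = 1 + O(x̄²) as x̄ → 0; in particular K → 1, the true Gaussian curvature of the unit sphere. -/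
open Real Filter Asymptotics

/-- with corrected lengths `L̃² = L̄² + (1/12)L̄⁴` applied to
`L̄²_pa = 2(1 − √(1−x̄²))` and `L̄²_ab = 2x̄²`, setting `x̃² = L̃²_pa`, the curvature
estimate `K = 3(2x̃² − L̃²_ab)/x̃⁴` satisfies `K = 1 + O(x̄²)` as `x̄ → 0⁺`; in particular
`K → 1`, the true Gaussian curvature of the unit sphere. -/
theorem sphere_curvature_estimate_corrected :
    (fun xb : ℝ =>
        (let Lpa2 := 2 * (1 - Real.sqrt (1 - xb ^ 2))
         let Lab2 := 2 * xb ^ 2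
         let xt2 := Lpa2 + (1 / 12) * Lpa2 ^ 2
         3 * (2 * xt2 - (Lab2 + (1 / 12) * Lab2 ^ 2)) / xt2 ^ 2) - 1)
      =O[nhdsWithin 0 (Set.Ioi 0)] (fun xb => xb ^ 2) := by
  rw [isBigO_iff]
  refine ⟨1, ?_⟩
  filter_upwards [Ioo_mem_nhdsGT_of_mem (by norm_num : (0:ℝ) ∈ Set.Ico 0 1)] with x hx
  obtain ⟨hx0, hx1⟩ := hx
  set s := Real.sqrt (1 - x ^ 2) with hs
  have hx2nn : (0:ℝ) ≤ 1 - x ^ 2 := by nlinarith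
  have hs2 : s ^ 2 = 1 - x ^ 2 := Real.sq_sqrt hx2nn
  have hs0 : 0 ≤ s := Real.sqrt_nonneg _
  have hslt : s < 1 := by nlinarith
  have hx2 : x ^ 2 = (1 - s) * (1 + s) := by nlinarith
  have hden : 2 * (1 - s) + (1 / 12) * (2 * (1 - s)) ^ 2 ≠ 0 := by nlinarith
  have key : (3 * (2 * (2 * (1 - s) + (1 / 12) * (2 * (1 - s)) ^ 2) -
        (2 * x ^ 2 + (1 / 12) * (2 * x ^ 2) ^ 2)) /
        (2 * (1 - s) + (1 / 12) * (2 * (1 - s)) ^ 2) ^ 2) - 1 =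
      ((8 / 3) * (1 - s) - (10 / 9) * (1 - s) ^ 2) / (2 + (1 - s) / 3) ^ 2 := by
    have h1 : (1 - s) ≠ 0 := by nlinarith
    have h2 : (2 + (1 - s) / 3) ≠ 0 := by nlinarith
    have e1 : 2 * (1 - s) + (1 / 12) * (2 * (1 - s)) ^ 2 = (1 - s) * (2 + (1 - s) / 3) := by
      ring
    rw [hx2, e1, mul_pow]
    rw [div_sub_one (by positivity), div_eq_div_iff (by positivity) (by positivity)]
    ring
  simp only [key, Real.norm_eq_abs]
  have ht0 : 0 < 1 - s := by linarith
  have ht1 : 1 - s ≤ 1 := by linarith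
  have hnum : 0 ≤ (8 / 3) * (1 - s) - (10 / 9) * (1 - s) ^ 2 := by nlinarith
  have hd4 : (4:ℝ) ≤ (2 + (1 - s) / 3) ^ 2 := by nlinarith
  rw [abs_of_nonneg (by positivity : (0:ℝ) ≤ x ^ 2),
      abs_of_nonneg (div_nonneg hnum (by positivity))]
  rw [div_le_iff₀ (by positivity)]
  nlinarith
end
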